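/- Let G be a finite group acting on a finite set X and let Δ_G ⊂ (X₁ ⊔ X₂)ⁿ be the big G-diagonal. For finite G-sets X₁, X₂: ((X₁ ⊔ X₂)ⁿ \ Δ_G) with the G_n-action is G_n-equivariantly isomorphic to the disjoint union over k = 0,...,n of ind_{G_k × G_{n-k}}^{G_n}((X₁^k \ Δ_G) × (X₂^{n-k} \ Δ_G)). -/

import Mathlib

/-- Componentwise action of `G × G'` on `X × X'`. -/
instance prodPairAction (G G' X X' : Type*) [Group G] [Group G']
    [MulAction G X] [MulAction G' X'] : MulAction (G × G') (X × X') where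
  smul p q := (p.1 • q.1, p.2 • q.2)
  one_smul q := Prod.ext (one_smul G q.1) (one_smul G' q.2)
  mul_smul a b q := Prod.ext (mul_smul a.1 b.1 q.1) (mul_smul a.2 b.2 q.2)
section Ind
variable {K H : Type*} [Group K] [Group H]

/-- The equivalence relation on `H × X` defining the induced `H`-set of a `K`-set `X`
along a homomorphism `f : K →* H`:
`(h₁,x₁) ∼ (h₂,x₂)` iff `∃ g, h₂ = h₁ (f g)⁻¹` and `x₂ = g • x₁`. -/
def indSetoid (f : K →* H) (X : Type*) [MulAction K X] : Setoid (H × X) where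
  r p q := ∃ g : K, q.1 = p.1 * (f g)⁻¹ ∧ q.2 = g • p.2
  iseqv := by
    constructor
    · exact fun p => ⟨1, by simp⟩
    · rintro p q ⟨g, h1, h2⟩
      exact ⟨g⁻¹, by simp [h1, mul_assoc], by simp [h2]⟩
    · rintro p q r ⟨g, h1, h2⟩ ⟨g', h1', h2'⟩
      exact ⟨g' * g, by simp [h1, h1', mul_assoc], by simp [h2, h2', mul_smul]⟩

/-- The induced `H`-set `ind_K^H X = (H × X)/∼`. -/
def Ind (f : K →* H) (X : Type*) [MulAction K X] : Type _ := Quotient (indSetoid f X)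

/-- `H` acts on the induced set by left multiplication on the first coordinate. -/
instance Ind.mulAction (f : K →* H) (X : Type*) [MulAction K X] :
    MulAction H (Ind f X) where
  smul h := Quotient.map (fun p => (h * p.1, p.2))
    (by rintro p q ⟨g, h1, h2⟩; exact ⟨g, by simp [h1, mul_assoc], h2⟩)
  one_smul x := by
    refine Quotient.inductionOn x (fun p => ?_)
    show Quotient.map _ _ _ = _
    simp
  mul_smul a b x := by
    refine Quotient.inductionOn x (fun p => ?_)
    show Quotient.map _ _ _ = Quotient.map _ _ (Quotient.map _ _ _)
    simp [mul_assoc]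

end Ind
section Wreath

variable (G : Type*) [Group G] (ι : Type*)

/-- Permutations of `ι` act on `ι → G` by automorphisms (permuting the factors). -/
def permAut : Equiv.Perm ι →* MulAut (ι → G) where
  toFun σ :=
    { toEquiv := Equiv.arrowCongr σ (Equiv.refl G)
      map_mul' := fun v w => rfl }
  map_one' := by ext v i; rfl
  map_mul' σ τ := by ext v i; rfl

/-- The wreath product `G_ι = G^ι ⋊ Perm ι`. -/
def Wr : Type _ := (ι → G) ⋊[permAut G ι] Equiv.Perm ι

instance : Group (Wr G ι) := inferInstanceAs (Group ((ι → G) ⋊[permAut G ι] Equiv.Perm ι))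

variable {G ι}

/-- The `G^ι`-component of an element of the wreath product. -/
def Wr.l (w : Wr G ι) : ι → G := SemidirectProduct.left w

/-- The `Perm ι`-component of an element of the wreath product. -/
def Wr.p (w : Wr G ι) : Equiv.Perm ι := SemidirectProduct.right w

/-- Building an element of the wreath product from its two components. -/
def Wr.mk (v : ι → G) (σ : Equiv.Perm ι) : Wr G ι := ⟨v, σ⟩

@[simp] lemma Wr.l_mk (v : ι → G) (σ : Equiv.Perm ι) : (Wr.mk v σ).l = v := rfl
@[simp] lemma Wr.p_mk (v : ι → G) (σ : Equiv.Perm ι) : (Wr.mk v σ).p = σ := rfl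
@[simp] lemma Wr.l_one : (1 : Wr G ι).l = 1 := rfl
@[simp] lemma Wr.p_one : (1 : Wr G ι).p = 1 := rfl
@[simp] lemma Wr.l_mul (a b : Wr G ι) : (a * b).l = a.l * fun i => b.l (a.p.symm i) := rfl
@[simp] lemma Wr.p_mul (a b : Wr G ι) : (a * b).p = a.p * b.p := rfl

variable (G ι)

/-- The natural action of the wreath product `G_ι` on `X^ι`:
`S_ι` permutes the factors and `G^ι` acts componentwise. -/
instance wrAction (X : Type*) [MulAction G X] : MulAction (Wr G ι) (ι → X) where
  smul w y := fun i => w.l i • y (w.p.symm i)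
  one_smul y := funext fun i => by
    show (1 : Wr G ι).l i • y ((1 : Wr G ι).p.symm i) = y i
    simp <;> rfl
  mul_smul a b y := funext fun i => by
    show (a * b).l i • y ((a * b).p.symm i) =
      a.l i • b.l (a.p.symm i) • y (b.p.symm (a.p.symm i))
    rw [Wr.l_mul, Wr.p_mul, Pi.mul_apply, mul_smul]
    rfl

@[simp] lemma wr_smul_apply {X : Type*} [MulAction G X] (w : Wr G ι) (y : ι → X) (i : ι) :
    (w • y) i = w.l i • y (w.p.symm i) := rfl

end Wreath
section WreathHoms

@[simp] lemma Wr.mk_mul {G : Type*} [Group G] {ι : Type*} (v w : ι → G)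
    (σ τ : Equiv.Perm ι) :
    Wr.mk v σ * Wr.mk w τ = Wr.mk (fun i => v i * w (σ.symm i)) (σ * τ) := rfl

@[simp] lemma Wr.left_mk {G : Type*} [Group G] {ι : Type*} (v : ι → G) (σ : Equiv.Perm ι) :
    SemidirectProduct.left (Wr.mk v σ) = v := rfl

@[simp] lemma Wr.right_mk {G : Type*} [Group G] {ι : Type*} (v : ι → G) (σ : Equiv.Perm ι) :
    SemidirectProduct.right (Wr.mk v σ) = σ := rfl

variable (G : Type*) [Group G]

/-- The natural embedding `G_ι × G_κ → G_{ι ⊕ κ}` of wreath products. -/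
def wrJoin (ι κ : Type*) : Wr G ι × Wr G κ →* Wr G (ι ⊕ κ) where
  toFun p := Wr.mk (Sum.elim p.1.l p.2.l) (Equiv.Perm.sumCongrHom ι κ (p.1.p, p.2.p))
  map_one' := by
    apply SemidirectProduct.ext
    · funext i; cases i <;> rfl
    · show Equiv.Perm.sumCongrHom ι κ (1, 1) = 1
      exact map_one _
  map_mul' p q := by
    show Wr.mk _ _ = Wr.mk _ _ * Wr.mk _ _
    rw [Wr.mk_mul]
    apply SemidirectProduct.ext
    · funext i
      cases i with
      | inl a =>
          show (p.1.l * fun i => q.1.l (p.1.p.symm i)) a = _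
          simp [Equiv.Perm.sumCongrHom]
      | inr b =>
          show (p.2.l * fun i => q.2.l (p.2.p.symm i)) b = _
          simp [Equiv.Perm.sumCongrHom]
    · exact map_mul (Equiv.Perm.sumCongrHom ι κ) (p.1.p, p.2.p) (q.1.p, q.2.p)

/-- Transport of wreath products along a bijection of index sets. -/
def wrCongrHom {ι κ : Type*} (e : ι ≃ κ) : Wr G ι →* Wr G κ where
  toFun w := Wr.mk (w.l ∘ e.symm) (e.permCongr w.p)
  map_one' := by
    apply SemidirectProduct.ext
    · rfl
    · show e.permCongr 1 = 1
      ext x; simp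
  map_mul' a b := by
    show Wr.mk _ _ = Wr.mk _ _ * Wr.mk _ _
    rw [Wr.mk_mul]
    apply SemidirectProduct.ext
    · funext i
      show (a.l * fun i => b.l (a.p.symm i)) (e.symm i) = _
      simp [Equiv.permCongr, Equiv.equivCongr]
    · ext x
      simp [Equiv.permCongr, Equiv.equivCongr, Equiv.Perm.mul_apply]

/-- The homomorphism of wreath products `K_ι → H_ι` induced by `f : K →* H`. -/
def wrMapHom {K H : Type*} [Group K] [Group H] (f : K →* H) (ι : Type*) :
    Wr K ι →* Wr H ι where
  toFun w := Wr.mk (f ∘ w.l) w.p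
  map_one' := by
    apply SemidirectProduct.ext
    · funext i; exact map_one f
    · rfl
  map_mul' a b := by
    show Wr.mk _ _ = Wr.mk _ _ * Wr.mk _ _
    rw [Wr.mk_mul]
    apply SemidirectProduct.ext
    · funext i
      show f ((a.l * fun i => b.l (a.p.symm i)) i) = _
      simp
    · rfl

variable (ι : Type*)

/-- The big `G`-diagonal in `X^ι`: tuples with two coordinates in the same `G`-orbit. -/
def bigDiag (X : Type*) [MulAction G X] : Set (ι → X) :=
  {y | ∃ i j, i ≠ j ∧ y i ∈ MulAction.orbit G (y j)}

/-- The wreath product `G_ι` acts on the complement of the big diagonal in `X^ι`. -/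
instance wrDiagAction (X : Type*) [MulAction G X] :
    MulAction (Wr G ι) {y : ι → X // y ∉ bigDiag G ι X} where
  smul w y := ⟨w • (y : ι → X), by
    rintro ⟨i, j, hij, g, hg⟩
    apply y.2
    refine ⟨w.p.symm i, w.p.symm j, fun h => hij (by simpa using congrArg w.p h), ?_⟩
    refine ⟨(w.l i)⁻¹ * g * w.l j, ?_⟩
    have hg' : g • (w.l j • (y : ι → X) (w.p.symm j)) = w.l i • (y : ι → X) (w.p.symm i) := hg
    calc ((w.l i)⁻¹ * g * w.l j) • (y : ι → X) (w.p.symm j)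
        = (w.l i)⁻¹ • g • w.l j • (y : ι → X) (w.p.symm j) := by
          rw [mul_smul, mul_smul]
      _ = (y : ι → X) (w.p.symm i) := by rw [hg', inv_smul_smul]⟩
  one_smul y := Subtype.ext (one_smul _ (y : ι → X))
  mul_smul a b y := Subtype.ext (mul_smul a b (y : ι → X))

end WreathHoms
/-- The natural embedding `G_k × G_{n-k} → G_n` of wreath products (via the identification
`Fin k ⊕ Fin (n-k) ≃ Fin n`). -/
def wrEmbed (G : Type*) [Group G] (n k : ℕ) (hk : k ≤ n) :
    Wr G (Fin k) × Wr G (Fin (n - k)) →* Wr G (Fin n) :=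
  (wrCongrHom G (finSumFinEquiv.trans (finCongr (by omega)))).comp
    (wrJoin G (Fin k) (Fin (n - k)))

/-!
A tuple in `(X₁ ⊔ X₂)ⁿ \ Δ_G` determines the set of its coordinates lying in `X₁`; its size `k`
is a `G_n`-invariant. A permutation moves every tuple with invariant `k` to one whose first `k`
coordinates form a point of `X₁^k \ Δ_G` and whose last `n - k` form a point of
`X₂^{n-k} \ Δ_G`. An element of `G_n` carrying one such tuple to another preserves the first `k`
positions as a set, so it lies in `G_k × G_{n-k}`; hence `[w, x] ↦ w • x` identifies the induced
set with the tuples of invariant `k`.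
-/

open Function MulAction

section Induced

variable {K H : Type*} [Group K] [Group H] (f : K →* H) {X Y : Type*} [MulAction K X]
  [MulAction H Y]

def Ind.mk (h : H) (x : X) : Ind f X := Quotient.mk (indSetoid f X) (h, x)

lemma Ind.mk_surjective (q : Ind f X) : ∃ h x, Ind.mk f h x = q :=
  Quotient.inductionOn q fun ⟨h, x⟩ => ⟨h, x, rfl⟩

lemma Ind.smul_mk (w h : H) (x : X) : w • Ind.mk f h x = Ind.mk f (w * h) x := rfl

def Ind.lift (j : X → Y) (hj : ∀ (g : K) (x : X), j (g • x) = f g • j x) : Ind f X → Y :=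
  Quotient.lift (fun p => p.1 • j p.2) <| by
    rintro ⟨h, x⟩ ⟨_, _⟩ ⟨g, rfl, rfl⟩
    simp only [hj, smul_smul, inv_mul_cancel_right]

variable (j : X → Y) (hj : ∀ (g : K) (x : X), j (g • x) = f g • j x)

lemma Ind.lift_mk (h : H) (x : X) : Ind.lift f j hj (Ind.mk f h x) = h • j x := rfl

lemma Ind.lift_smul (w : H) (q : Ind f X) : Ind.lift f j hj (w • q) = w • Ind.lift f j hj q := by
  obtain ⟨h, x, rfl⟩ := Ind.mk_surjective f q
  rw [Ind.smul_mk, Ind.lift_mk, Ind.lift_mk, mul_smul]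

lemma Ind.lift_injective (hinj : Injective j)
    (hstab : ∀ (h : H) (x x' : X), h • j x = j x' → h ∈ f.range) :
    Injective (Ind.lift f j hj) := by
  intro q q' hqq'
  obtain ⟨h, x, rfl⟩ := Ind.mk_surjective f q
  obtain ⟨h', x', rfl⟩ := Ind.mk_surjective f q'
  rw [Ind.lift_mk, Ind.lift_mk] at hqq'
  have hmove : (h'⁻¹ * h) • j x = j x' := by rw [mul_smul, hqq', inv_smul_smul]
  obtain ⟨g, hg⟩ := hstab _ _ _ hmove
  refine Quotient.sound ⟨g, ?_, hinj ?_⟩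
  · rw [hg]; group
  · rw [← hmove, ← hg, hj]

end Induced

section SumAction

variable {G : Type*} [Group G] {α β : Type*} [MulAction G α] [MulAction G β]

lemma Sum.isLeft_smul (g : G) (s : α ⊕ β) : (g • s).isLeft = s.isLeft := by
  cases s <;> rfl

lemma Sum.isLeft_eq_of_mem_orbit {s t : α ⊕ β} (h : s ∈ orbit G t) : s.isLeft = t.isLeft := by
  obtain ⟨g, rfl⟩ := h
  exact Sum.isLeft_smul g t

lemma Sum.inl_mem_orbit_inl_iff {a b : α} :
    (Sum.inl a : α ⊕ β) ∈ orbit G (Sum.inl b) ↔ a ∈ orbit G b := by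
  simp only [mem_orbit_iff, Sum.smul_inl, Sum.inl.injEq]

lemma Sum.inr_mem_orbit_inr_iff {a b : β} :
    (Sum.inr a : α ⊕ β) ∈ orbit G (Sum.inr b) ↔ a ∈ orbit G b := by
  simp only [mem_orbit_iff, Sum.smul_inr, Sum.inr.injEq]

end SumAction

section BigDiag

variable (G : Type*) [Group G] {ι κ ν : Type*} {X α β : Type*} [MulAction G X] [MulAction G α]
  [MulAction G β]

lemma comp_symm_mem_bigDiag_iff (e : ι ≃ ν) (y : ι → X) :
    y ∘ e.symm ∈ bigDiag G ν X ↔ y ∈ bigDiag G ι X := by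
  constructor
  · rintro ⟨i, j, hij, h⟩
    exact ⟨e.symm i, e.symm j, e.symm.injective.ne hij, h⟩
  · rintro ⟨i, j, hij, h⟩
    exact ⟨e i, e j, e.injective.ne hij, by simpa using h⟩

lemma sumMap_mem_bigDiag_iff (x₁ : ι → α) (x₂ : κ → β) :
    Sum.map x₁ x₂ ∈ bigDiag G (ι ⊕ κ) (α ⊕ β) ↔ x₁ ∈ bigDiag G ι α ∨ x₂ ∈ bigDiag G κ β := by
  constructor
  · rintro ⟨i | i, j | j, hij, h⟩
    · exact .inl ⟨i, j, by simpa using hij, Sum.inl_mem_orbit_inl_iff.mp h⟩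
    · exact absurd (Sum.isLeft_eq_of_mem_orbit h) (by simp)
    · exact absurd (Sum.isLeft_eq_of_mem_orbit h) (by simp)
    · exact .inr ⟨i, j, by simpa using hij, Sum.inr_mem_orbit_inr_iff.mp h⟩
  · rintro (⟨i, j, hij, h⟩ | ⟨i, j, hij, h⟩)
    · exact ⟨.inl i, .inl j, by simpa using hij, Sum.inl_mem_orbit_inl_iff.mpr h⟩
    · exact ⟨.inr i, .inr j, by simpa using hij, Sum.inr_mem_orbit_inr_iff.mpr h⟩

end BigDiag

section WreathSum

variable (G : Type*) [Group G] {ι κ ν : Type*}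

def wrSumHom (e : ι ⊕ κ ≃ ν) : Wr G ι × Wr G κ →* Wr G ν :=
  (wrCongrHom G e).comp (wrJoin G ι κ)

variable {G} {α β : Type*} [MulAction G α] [MulAction G β]

lemma Wr.mk_one_smul {X : Type*} [MulAction G X] (σ : Equiv.Perm ν) (y : ν → X) :
    Wr.mk (1 : ν → G) σ • y = y ∘ σ.symm :=
  funext fun _ => one_smul G _

lemma wrSumHom_smul_sumMap (e : ι ⊕ κ ≃ ν) (p : Wr G ι × Wr G κ) (x₁ : ι → α) (x₂ : κ → β) :
    wrSumHom G e p • (Sum.map x₁ x₂ ∘ e.symm) = Sum.map (p.1 • x₁) (p.2 • x₂) ∘ e.symm := by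
  funext i
  change Sum.elim p.1.l p.2.l (e.symm i) •
    Sum.map x₁ x₂ (e.symm (e (Sum.map p.1.p.symm p.2.p.symm (e.symm i)))) =
    Sum.map (p.1 • x₁) (p.2 • x₂) (e.symm i)
  rw [e.symm_apply_apply]
  rcases e.symm i with a | b <;> rfl

lemma mem_range_wrSumHom [Finite ι] [Finite κ] (e : ι ⊕ κ ≃ ν) {u : Wr G ν}
    (hu : Set.MapsTo (e.symm.permCongr u.p) (Set.range Sum.inl) (Set.range Sum.inl)) :
    u ∈ (wrSumHom G e).range := by
  obtain ⟨⟨σ₁, σ₂⟩, hσ⟩ := Equiv.Perm.mem_sumCongrHom_range_of_perm_mapsTo_inl hu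
  refine ⟨(Wr.mk (u.l ∘ e ∘ Sum.inl) σ₁, Wr.mk (u.l ∘ e ∘ Sum.inr) σ₂), ?_⟩
  apply SemidirectProduct.ext
  · funext i
    change Sum.elim ((u.l ∘ e) ∘ Sum.inl) ((u.l ∘ e) ∘ Sum.inr) (e.symm i) = u.l i
    rw [Sum.elim_comp_inl_inr, comp_apply, e.apply_symm_apply]
  · change e.permCongr (Equiv.Perm.sumCongrHom ι κ (σ₁, σ₂)) = u.p
    rw [hσ, ← Equiv.permCongr_symm, Equiv.apply_symm_apply]

lemma mem_range_wrSumHom_of_smul_sumMap_eq [Finite ι] [Finite κ] (e : ι ⊕ κ ≃ ν) {u : Wr G ν}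
    {x₁ x₁' : ι → α} {x₂ x₂' : κ → β}
    (hu : u • (Sum.map x₁ x₂ ∘ e.symm) = Sum.map x₁' x₂' ∘ e.symm) :
    u ∈ (wrSumHom G e).range := by
  refine mem_range_wrSumHom e ?_
  rintro _ ⟨a, rfl⟩
  have hleft := congrArg Sum.isLeft (congrFun hu (u.p (e (Sum.inl a))))
  simp only [wr_smul_apply, Sum.isLeft_smul, Equiv.symm_apply_apply, comp_apply, Sum.map_inl,
    Sum.isLeft_inl, Sum.isLeft_map] at hleft
  obtain ⟨b, hb⟩ := Sum.isLeft_iff.mp hleft.symm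
  exact ⟨b, hb.symm⟩

end WreathSum

/-- The ordered orbit configuration space `X^ι \ Δ_G`. -/
abbrev OrbitConfig (G : Type*) [Group G] (ι X : Type*) [MulAction G X] : Type _ :=
  {y : ι → X // y ∉ bigDiag G ι X}

section OrbitConfig

variable {G : Type*} [Group G] {ι κ ν : Type*} {α β : Type*} [MulAction G α] [MulAction G β]

def sumConfig (e : ι ⊕ κ ≃ ν) (x : OrbitConfig G ι α × OrbitConfig G κ β) :
    OrbitConfig G ν (α ⊕ β) :=
  ⟨Sum.map x.1.1 x.2.1 ∘ e.symm, by
    rw [comp_symm_mem_bigDiag_iff, sumMap_mem_bigDiag_iff]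
    exact not_or.mpr ⟨x.1.2, x.2.2⟩⟩

lemma sumConfig_smul (e : ι ⊕ κ ≃ ν) (p : Wr G ι × Wr G κ)
    (x : OrbitConfig G ι α × OrbitConfig G κ β) :
    sumConfig e (p • x) = wrSumHom G e p • sumConfig e x :=
  Subtype.ext (wrSumHom_smul_sumMap e p _ _).symm

lemma sumConfig_injective (e : ι ⊕ κ ≃ ν) :
    Injective (sumConfig (G := G) (α := α) (β := β) e) := by
  rintro ⟨⟨x₁, _⟩, ⟨x₂, _⟩⟩ ⟨⟨x₁', _⟩, ⟨x₂', _⟩⟩ h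
  have hmap : Sum.map x₁ x₂ = Sum.map x₁' x₂' :=
    (e.symm.surjective.injective_comp_right (congrArg Subtype.val h))
  simp only [Prod.mk.injEq, Subtype.mk.injEq]
  exact ⟨funext fun a => Sum.inl_injective (congrFun hmap (.inl a)),
    funext fun b => Sum.inr_injective (congrFun hmap (.inr b))⟩

lemma mem_range_of_smul_sumConfig_eq [Finite ι] [Finite κ] (e : ι ⊕ κ ≃ ν) {u : Wr G ν}
    {x x' : OrbitConfig G ι α × OrbitConfig G κ β} (h : u • sumConfig e x = sumConfig e x') :
    u ∈ (wrSumHom G e).range :=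
  mem_range_wrSumHom_of_smul_sumMap_eq e (congrArg Subtype.val h)

noncomputable def leftCount (y : ν → α ⊕ β) : ℕ := Nat.card {i // (y i).isLeft}

lemma leftCount_smul (w : Wr G ν) (y : ν → α ⊕ β) : leftCount (w • y) = leftCount y :=
  Nat.card_congr <| Equiv.subtypeEquiv w.p.symm fun i => by rw [wr_smul_apply, Sum.isLeft_smul]

lemma leftCount_sumMap (e : ι ⊕ κ ≃ ν) (x₁ : ι → α) (x₂ : κ → β) :
    leftCount (Sum.map x₁ x₂ ∘ e.symm) = Nat.card ι :=
  Nat.card_congr <| (Equiv.subtypeEquiv e.symm fun i => by simp).trans Equiv.sumIsLeft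

lemma exists_sumMap_eq (y : ν → α ⊕ β) (e : ι ⊕ κ ≃ ν) (h : ∀ s, (y (e s)).isLeft = s.isLeft) :
    ∃ (x₁ : ι → α) (x₂ : κ → β), y = Sum.map x₁ x₂ ∘ e.symm := by
  refine ⟨fun a => (y (e (.inl a))).getLeft (h _),
    fun b => (y (e (.inr b))).getRight (Sum.not_isLeft.mp (by rw [h]; simp)),
    funext fun i => ?_⟩
  obtain ⟨s, rfl⟩ := e.surjective i
  rw [comp_apply, e.symm_apply_apply]
  rcases s with a | b
  · exact (Sum.inl_getLeft _ _).symm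
  · exact (Sum.inr_getRight _ _).symm

lemma exists_equiv_isLeft [Finite ν] (y : ν → α ⊕ β) (e : ι ⊕ κ ≃ ν)
    (hcard : Nat.card ι = leftCount y) :
    ∃ e' : ι ⊕ κ ≃ ν, ∀ s, (y (e' s)).isLeft = s.isLeft := by
  have : Finite (ι ⊕ κ) := .of_equiv _ e.symm
  have : Finite ι := Finite.sum_left κ
  have : Finite κ := Finite.sum_right ι
  let P : ν → Prop := fun i => (y i).isLeft
  have hcard' : Nat.card κ = Nat.card {i // ¬P i} := by
    have h₁ := Nat.card_congr e
    have h₂ := Nat.card_congr (Equiv.sumCompl P)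
    rw [Nat.card_sum] at h₁ h₂
    change Nat.card ι = Nat.card {i // P i} at hcard
    omega
  obtain ⟨aL⟩ := Finite.card_eq.mp hcard
  obtain ⟨aR⟩ := Finite.card_eq.mp hcard'
  refine ⟨(aL.sumCongr aR).trans (Equiv.sumCompl P), ?_⟩
  rintro (a | b)
  · simpa using (aL a).2
  · simpa using Sum.not_isLeft.mp (aR b).2

lemma exists_smul_sumConfig_eq [Finite ν] (e : ι ⊕ κ ≃ ν) (y : OrbitConfig G ν (α ⊕ β))
    (hcard : Nat.card ι = leftCount y.1) :
    ∃ (w : Wr G ν) (x : OrbitConfig G ι α × OrbitConfig G κ β), w • sumConfig e x = y := by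
  obtain ⟨e', he'⟩ := exists_equiv_isLeft y.1 e hcard
  obtain ⟨x₁, x₂, hy⟩ := exists_sumMap_eq y.1 e' he'
  have hx : ¬(x₁ ∈ bigDiag G ι α ∨ x₂ ∈ bigDiag G κ β) := by
    rw [← sumMap_mem_bigDiag_iff, ← comp_symm_mem_bigDiag_iff G e', ← hy]
    exact y.2
  refine ⟨Wr.mk 1 (e.symm.trans e'), (⟨x₁, fun h => hx (.inl h)⟩, ⟨x₂, fun h => hx (.inr h)⟩),
    Subtype.ext ?_⟩
  change Wr.mk 1 _ • (Sum.map x₁ x₂ ∘ e.symm) = y.1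
  rw [Wr.mk_one_smul, hy]
  funext i
  simp

end OrbitConfig

def finSplit (n k : ℕ) (hk : k ≤ n) : Fin k ⊕ Fin (n - k) ≃ Fin n :=
  finSumFinEquiv.trans (finCongr (by omega))

section Decomposition

variable (G : Type*) [Group G] (X₁ X₂ : Type*) [MulAction G X₁] [MulAction G X₂] (n : ℕ)

/-- On the `k`-th piece, `(x₁, x₂)` sits in `Xⁿ` as the tuple whose first `k` coordinates lie
in `X₁`. -/
def sigmaIndToOrbitConfig :
    (Σ k : Fin (n + 1), Ind (wrEmbed G n k (Fin.is_le k))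
      (OrbitConfig G (Fin k) X₁ × OrbitConfig G (Fin (n - k)) X₂)) →
    OrbitConfig G (Fin n) (X₁ ⊕ X₂) :=
  -- `sumConfig_smul` is stated for `wrSumHom`, of which `wrEmbed` is the instance `finSplit`.
  fun q => Ind.lift _ (sumConfig (finSplit n q.1 (Fin.is_le q.1))) (sumConfig_smul _) q.2

variable {G X₁ X₂ n}

lemma sigmaIndToOrbitConfig_smul (w : Wr G (Fin n)) (q) :
    sigmaIndToOrbitConfig G X₁ X₂ n (w • q) = w • sigmaIndToOrbitConfig G X₁ X₂ n q :=
  Ind.lift_smul _ _ _ w q.2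

lemma leftCount_sigmaIndToOrbitConfig (q) :
    leftCount (sigmaIndToOrbitConfig G X₁ X₂ n q).1 = q.1 := by
  obtain ⟨k, q⟩ := q
  obtain ⟨h, x, rfl⟩ := Ind.mk_surjective _ q
  change leftCount (h • Sum.map x.1.1 x.2.1 ∘ (finSplit n k (Fin.is_le k)).symm) = k
  rw [leftCount_smul, leftCount_sumMap, Nat.card_fin]

variable (G X₁ X₂ n)

lemma sigmaIndToOrbitConfig_bijective : Bijective (sigmaIndToOrbitConfig G X₁ X₂ n) := by
  constructor
  · rintro ⟨k, q⟩ ⟨k', q'⟩ hqq'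
    obtain rfl : k = k' := Fin.ext <| by
      rw [← leftCount_sigmaIndToOrbitConfig ⟨k, q⟩, hqq', leftCount_sigmaIndToOrbitConfig]
    exact congrArg (Sigma.mk k) (Ind.lift_injective _ _ _ (sumConfig_injective _)
      (fun _ _ _ => mem_range_of_smul_sumConfig_eq _) hqq')
  · intro y
    have hk : leftCount y.1 ≤ n :=
      (Finite.card_subtype_le fun i => (y.1 i).isLeft).trans_eq (Nat.card_fin n)
    let k : Fin (n + 1) := ⟨leftCount y.1, by omega⟩
    obtain ⟨w, x, hwx⟩ :=
      exists_smul_sumConfig_eq (finSplit n k (Fin.is_le k)) y (Nat.card_fin _)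
    exact ⟨⟨k, Ind.mk _ w x⟩, hwx⟩

end Decomposition

theorem sum_power_minus_diagonal_decomposes_into_induced_pieces_general
    (G : Type) [Group G]
    (X₁ X₂ : Type) [MulAction G X₁] [MulAction G X₂] (n : ℕ) :
    ∃ e : {y : Fin n → (X₁ ⊕ X₂) // y ∉ bigDiag G (Fin n) (X₁ ⊕ X₂)} ≃
        Σ k : Fin (n + 1),
          Ind (wrEmbed G n k (Fin.is_le k))
            ({y : Fin (k : ℕ) → X₁ // y ∉ bigDiag G (Fin (k : ℕ)) X₁} ×
              {y : Fin (n - (k : ℕ)) → X₂ // y ∉ bigDiag G (Fin (n - (k : ℕ))) X₂}),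
      ∀ (w : Wr G (Fin n)) y, e (w • y) = w • e y := by
  let F := Equiv.ofBijective _ (sigmaIndToOrbitConfig_bijective G X₁ X₂ n)
  refine ⟨F.symm, fun w y => F.symm_apply_eq.mpr ?_⟩
  change _ = sigmaIndToOrbitConfig G X₁ X₂ n _
  rw [sigmaIndToOrbitConfig_smul]
  exact congrArg (w • ·) (F.apply_symm_apply y).symm

theorem sum_power_minus_diagonal_decomposes_into_induced_pieces
    (G : Type) [Group G] [Finite G]
    (X₁ X₂ : Type) [MulAction G X₁] [MulAction G X₂] [Finite X₁] [Finite X₂] (n : ℕ) :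
    ∃ e : {y : Fin n → (X₁ ⊕ X₂) // y ∉ bigDiag G (Fin n) (X₁ ⊕ X₂)} ≃
        Σ k : Fin (n + 1),
          Ind (wrEmbed G n k (Fin.is_le k))
            ({y : Fin (k : ℕ) → X₁ // y ∉ bigDiag G (Fin (k : ℕ)) X₁} ×
              {y : Fin (n - (k : ℕ)) → X₂ // y ∉ bigDiag G (Fin (n - (k : ℕ))) X₂}),
      ∀ (w : Wr G (Fin n)) y, e (w • y) = w • e y :=
  sum_power_minus_diagonal_decomposes_into_induced_pieces_general G X₁ X₂ n
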